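/- arXiv:0904.1683 — 5 statements merged into one kernel-verified Lean document; each statement's English description precedes it below -/
import Mathlib

section
/- Let P be a poset in which every closed interval is finite and let ~ be an equivalence relation on Int(P) satisfying Axiom 1 (order-compatibility) and Axiom 2 part (a) (existence of the intertwining maps τ). Then the reduced incidence algebra k[P]_red over a field k, with multiplication ξ_{[x,y]~}·ξ_{[z,w]~} = ξ_{[x',w']~} if there exist x' ≤ y' ≤ w' with [x',y']~[x,y] and [y',w']~[z,w] and 0 otherwise, is an associative k-algebra. -/
noncomputable section
/-! ### Posets, intervals, and equivalence relations on intervals -/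

/-- The set of closed intervals `[x, y]` of a poset `P`, encoded as pairs `x ≤ y`. -/
abbrev IntP (P : Type) [PartialOrder P] : Type := {p : P × P // p.1 ≤ p.2}

/-- The closed interval `[x, y]` as an element of `IntP P`. -/
def itv {P : Type} [PartialOrder P] (x y : P) (h : x ≤ y) : IntP P := ⟨(x, y), h⟩

section PosetRel

variable {P : Type} [PartialOrder P]

/-- The interval map `int_{[x,y]}` sending `z ∈ [x, y]` to the pair of `∼`-classes
`([x,z]∼, [z,y]∼)`. -/
def intMap (S : Setoid (IntP P)) {x y : P} (z : Set.Icc x y) :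
    Quotient S × Quotient S :=
  (Quotient.mk S (itv x (z : P) z.2.1), Quotient.mk S (itv (z : P) y z.2.2))

/-- Axiom 1 (order-compatibility): if `[x,y] ∼ [x',y']` and `[y,z] ∼ [y',z']`
then `[x,z] ∼ [x',z']`. -/
def Ax1 (S : Setoid (IntP P)) : Prop :=
  ∀ (x y z x' y' z' : P) (hxy : x ≤ y) (hyz : y ≤ z) (hxy' : x' ≤ y') (hyz' : y' ≤ z'),
    S.r (itv x y hxy) (itv x' y' hxy') → S.r (itv y z hyz) (itv y' z' hyz') →
    S.r (itv x z (hxy.trans hyz)) (itv x' z' (hxy'.trans hyz'))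

/-- Axiom 2, part (a) (invariance, existence): whenever `[x,y] ∼ [x',y']` there is a
map `τ : [x,y] → [x',y']` commuting with the interval maps. -/
def Ax2a (S : Setoid (IntP P)) : Prop :=
  ∀ (x y x' y' : P) (h : x ≤ y) (h' : x' ≤ y'),
    S.r (itv x y h) (itv x' y' h') →
    ∃ τ : Set.Icc x y → Set.Icc x' y', ∀ z, intMap S (τ z) = intMap S z

/-- Axiom 2 (invariance, existence and uniqueness): whenever `[x,y] ∼ [x',y']` there is a
unique map `τ : [x,y] → [x',y']` commuting with the interval maps. -/
def Ax2 (S : Setoid (IntP P)) : Prop :=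
  ∀ (x y x' y' : P) (h : x ≤ y) (h' : x' ≤ y'),
    S.r (itv x y h) (itv x' y' h') →
    ∃! τ : Set.Icc x y → Set.Icc x' y', ∀ z, intMap S (τ z) = intMap S z

/-- The class of the one-point interval `[x,x]`. -/
def diagCl (S : Setoid (IntP P)) (x : P) : Quotient S := Quotient.mk S (itv x x le_rfl)

/-- The diagonal classes, i.e. classes of one-point intervals. -/
def IsDiag (S : Setoid (IntP P)) (α : Quotient S) : Prop := ∃ x : P, α = diagCl S x

/-- Axiom 3 (finiteness): the induced equivalence relation on points
(`x ∼ y` iff `[x,x] ∼ [y,y]`) has only finitely many classes. -/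
def Ax3 (S : Setoid (IntP P)) : Prop := {α : Quotient S | IsDiag S α}.Finite

/-- Axiom 4 (concatenation): if `x ≤ y₁` and `y₂ ≤ z` with `y₁ ∼ y₂`, then there are
`x' ≤ y' ≤ z'` with `[x',y'] ∼ [x,y₁]` and `[y',z'] ∼ [y₂,z]`. -/
def Ax4 (S : Setoid (IntP P)) : Prop :=
  ∀ (x y₁ y₂ z : P) (h1 : x ≤ y₁) (h2 : y₂ ≤ z),
    S.r (itv y₁ y₁ le_rfl) (itv y₂ y₂ le_rfl) →
    ∃ (x' y' z' : P) (hxy : x' ≤ y') (hyz : y' ≤ z'),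
      S.r (itv x' y' hxy) (itv x y₁ h1) ∧ S.r (itv y' z' hyz) (itv y₂ z h2)

/-- The source of a class `α = [x,y]∼`, namely the diagonal class `[x,x]∼`
(well defined under Axioms 1 and 2; here defined via a chosen representative). -/
noncomputable def sclP (S : Setoid (IntP P)) (α : Quotient S) : Quotient S :=
  diagCl S α.out.val.1

/-- The target of a class `α = [x,y]∼`, namely the diagonal class `[y,y]∼`
(well defined under Axioms 1 and 2; here defined via a chosen representative). -/
noncomputable def tclP (S : Setoid (IntP P)) (α : Quotient S) : Quotient S :=
  diagCl S α.out.val.2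

/-- The length of the interval `[x, y]`: the length of a longest chain from `x` to `y`. -/
noncomputable def intLen (x y : P) : ℕ :=
  sSup {n | ∃ c : Finset P, (c : Set P) ⊆ Set.Icc x y ∧ IsChain (· ≤ ·) (c : Set P) ∧
    x ∈ c ∧ y ∈ c ∧ c.card = n + 1}

/-- The length of a class of intervals (via a chosen representative; well defined
under Axioms 1 and 2). -/
noncomputable def lenCl (S : Setoid (IntP P)) (α : Quotient S) : ℕ :=
  intLen α.out.val.1 α.out.val.2

/-- The multiplication rule of the reduced incidence algebra `k[P]_red`, for a family
`ξ` of elements indexed by `Int(P)/∼` (in the intended application, a basis):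
`ξ_{[x,y]∼} ξ_{[z,w]∼} = ξ_{[x',w']∼}` if there exist `x' ≤ y' ≤ w'` with
`[x',y'] ∼ [x,y]` and `[y',w'] ∼ [z,w]`, and `0` otherwise. -/
def MulRuleA {A : Type} [Ring A] (S : Setoid (IntP P)) (ξ : Quotient S → A) : Prop :=
  ∀ α β : Quotient S,
    (∀ (x y w : P) (h1 : x ≤ y) (h2 : y ≤ w),
        α = Quotient.mk S (itv x y h1) → β = Quotient.mk S (itv y w h2) →
        ξ α * ξ β = ξ (Quotient.mk S (itv x w (h1.trans h2)))) ∧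
    ((¬ ∃ (x y w : P) (h1 : x ≤ y) (h2 : y ≤ w),
        α = Quotient.mk S (itv x y h1) ∧ β = Quotient.mk S (itv y w h2)) →
      ξ α * ξ β = 0)

/-- The multiplication rule of the associated graded ring `gr_I k[P]_red`, for a family
`ξ` of elements indexed by `Int(P)/∼` (in the intended application, a basis):
as for `k[P]_red`, but with the additional requirement that lengths add up. -/
def MulRuleR {A : Type} [Ring A] (S : Setoid (IntP P)) (ξ : Quotient S → A) : Prop :=
  ∀ α β : Quotient S,
    (∀ (x y w : P) (h1 : x ≤ y) (h2 : y ≤ w),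
        α = Quotient.mk S (itv x y h1) → β = Quotient.mk S (itv y w h2) →
        intLen x w = intLen x y + intLen y w →
        ξ α * ξ β = ξ (Quotient.mk S (itv x w (h1.trans h2)))) ∧
    ((¬ ∃ (x y w : P) (h1 : x ≤ y) (h2 : y ≤ w),
        α = Quotient.mk S (itv x y h1) ∧ β = Quotient.mk S (itv y w h2) ∧
        intLen x w = intLen x y + intLen y w) →
      ξ α * ξ β = 0)

/-- The poset `(x, y)|_J`: elements `z` of the open interval `(x, y)` such that the
class of `[x, z]` lies in the monomial ideal (set of classes) `J`. -/
def subJ (S : Setoid (IntP P)) (Jset : Set (Quotient S)) (x y : P) : Set P :=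
  {z : P | ∃ hz : x < z ∧ z < y, Quotient.mk S (itv x z hz.1.le) ∈ Jset}

end PosetRel
/-!
Associativity on basis vectors is all that needs checking. If `α, β, γ` are represented by
consecutive intervals `[x,y], [y,z], [z,w]`, both products are `ξ_{[x,w]}`. Otherwise both
products vanish: were, say, `(ξ_α ξ_β) ξ_γ` nonzero, with `α β` represented by `[x,y], [y,z]`
and `[x,z] ∼ [x',z']` composable with `γ`, the intertwining map `τ : [x,z] → [x',z']` of
Axiom 2(a) would send `y` to a point `y'` splitting `[x',z']` into representatives of `α` and
`β`, so that `α, β, γ` would be represented by consecutive intervals after all.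
-/

theorem Finsupp.assoc_of_assoc_single {R ι : Type*} [CommSemiring R]
    (mul : (ι →₀ R) →ₗ[R] (ι →₀ R) →ₗ[R] (ι →₀ R))
    (h : ∀ α β γ : ι, mul (mul (single α 1) (single β 1)) (single γ 1) =
      mul (single α 1) (mul (single β 1) (single γ 1)))
    (a b c : ι →₀ R) : mul (mul a b) c = mul a (mul b c) := by
  -- the two sides of the identity, as trilinear maps
  have htri : mul.compr₂ mul = (LinearMap.llcomp R _ _ _ ∘ₗ mul).compl₂ mul := by
    ext α β γ : 6
    simpa using h α β γ
  exact LinearMap.congr_fun (LinearMap.congr_fun₂ htri a b) c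

section Composable

variable {P : Type} [PartialOrder P] {S : Setoid (IntP P)}

def Composable (S : Setoid (IntP P)) (α β : Quotient S) : Prop :=
  ∃ (x y w : P) (h1 : x ≤ y) (h2 : y ≤ w),
    α = Quotient.mk S (itv x y h1) ∧ β = Quotient.mk S (itv y w h2)

def Composable₃ (S : Setoid (IntP P)) (α β γ : Quotient S) : Prop :=
  ∃ (x y z w : P) (h1 : x ≤ y) (h2 : y ≤ z) (h3 : z ≤ w),
    α = Quotient.mk S (itv x y h1) ∧ β = Quotient.mk S (itv y z h2) ∧
      γ = Quotient.mk S (itv z w h3)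

theorem Ax2a.exists_mid (hax : Ax2a S) {x y z x' z' : P} (h1 : x ≤ y) (h2 : y ≤ z)
    (h' : x' ≤ z') (hxz : Quotient.mk S (itv x z (h1.trans h2)) = Quotient.mk S (itv x' z' h')) :
    ∃ (y' : P) (h1' : x' ≤ y') (h2' : y' ≤ z'),
      Quotient.mk S (itv x' y' h1') = Quotient.mk S (itv x y h1) ∧
        Quotient.mk S (itv y' z' h2') = Quotient.mk S (itv y z h2) :=
  let ⟨τ, hτ⟩ := hax x z x' z' _ h' (Quotient.exact hxz)
  ⟨τ ⟨y, h1, h2⟩, _, _, Prod.ext_iff.mp (hτ ⟨y, h1, h2⟩)⟩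

theorem Ax2a.composable₃_of_composable_left (hax : Ax2a S) {x y z : P} {γ : Quotient S}
    (h1 : x ≤ y) (h2 : y ≤ z) (h : Composable S (Quotient.mk S (itv x z (h1.trans h2))) γ) :
    Composable₃ S (Quotient.mk S (itv x y h1)) (Quotient.mk S (itv y z h2)) γ := by
  obtain ⟨x', z', w, h', h3, hxz, rfl⟩ := h
  obtain ⟨y', h1', h2', hxy, hyz⟩ := hax.exists_mid h1 h2 h' hxz
  exact ⟨x', y', z', w, h1', h2', h3, hxy.symm, hyz.symm, rfl⟩

theorem Ax2a.composable₃_of_composable_right (hax : Ax2a S) {y z w : P} {α : Quotient S}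
    (h2 : y ≤ z) (h3 : z ≤ w) (h : Composable S α (Quotient.mk S (itv y w (h2.trans h3)))) :
    Composable₃ S α (Quotient.mk S (itv y z h2)) (Quotient.mk S (itv z w h3)) := by
  obtain ⟨x, y', w', h1, h', rfl, hyw⟩ := h
  obtain ⟨z', h2', h3', hyz, hzw⟩ := hax.exists_mid h2 h3 h' hyw
  exact ⟨x, y', z', w', h1, h2', h3', rfl, hyz.symm, hzw.symm⟩

end Composable

section IncidenceMul

open Finsupp

variable {P : Type} [PartialOrder P] {S : Setoid (IntP P)} {k : Type} [CommSemiring k]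

/-- The multiplication rule of `k[P]_red` on the basis `ξ_α = single α 1` of `Quotient S →₀ k`. -/
def IsIncidenceMul (S : Setoid (IntP P))
    (mul : (Quotient S →₀ k) →ₗ[k] (Quotient S →₀ k) →ₗ[k] (Quotient S →₀ k)) : Prop :=
  ∀ α β : Quotient S,
    (∀ (x y w : P) (h1 : x ≤ y) (h2 : y ≤ w),
        α = Quotient.mk S (itv x y h1) → β = Quotient.mk S (itv y w h2) →
        mul (single α 1) (single β 1) = single (Quotient.mk S (itv x w (h1.trans h2))) 1) ∧
      (¬ Composable S α β → mul (single α 1) (single β 1) = 0)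

namespace IsIncidenceMul

variable {mul : (Quotient S →₀ k) →ₗ[k] (Quotient S →₀ k) →ₗ[k] (Quotient S →₀ k)}

theorem mul_single_mk (hmul : IsIncidenceMul S mul) {x y w : P} (h1 : x ≤ y) (h2 : y ≤ w) :
    mul (single (Quotient.mk S (itv x y h1)) 1) (single (Quotient.mk S (itv y w h2)) 1) =
      single (Quotient.mk S (itv x w (h1.trans h2))) 1 :=
  (hmul _ _).1 x y w h1 h2 rfl rfl

theorem mul_single_eq_zero (hmul : IsIncidenceMul S mul) {α β : Quotient S}
    (h : ¬ Composable S α β) : mul (single α 1) (single β 1) = 0 :=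
  (hmul α β).2 h

theorem mul_left_assoc_eq_zero (hmul : IsIncidenceMul S mul) (hax : Ax2a S)
    {α β γ : Quotient S} (h : ¬ Composable₃ S α β γ) :
    mul (mul (single α 1) (single β 1)) (single γ 1) = 0 := by
  by_cases hαβ : Composable S α β
  · obtain ⟨x, y, z, h1, h2, rfl, rfl⟩ := hαβ
    rw [hmul.mul_single_mk]
    exact hmul.mul_single_eq_zero fun hc => h (hax.composable₃_of_composable_left h1 h2 hc)
  · rw [hmul.mul_single_eq_zero hαβ, map_zero, LinearMap.zero_apply]

theorem mul_right_assoc_eq_zero (hmul : IsIncidenceMul S mul) (hax : Ax2a S)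
    {α β γ : Quotient S} (h : ¬ Composable₃ S α β γ) :
    mul (single α 1) (mul (single β 1) (single γ 1)) = 0 := by
  by_cases hβγ : Composable S β γ
  · obtain ⟨y, z, w, h2, h3, rfl, rfl⟩ := hβγ
    rw [hmul.mul_single_mk]
    exact hmul.mul_single_eq_zero fun hc => h (hax.composable₃_of_composable_right h2 h3 hc)
  · rw [hmul.mul_single_eq_zero hβγ, map_zero]

theorem assoc_single (hmul : IsIncidenceMul S mul) (hax : Ax2a S) (α β γ : Quotient S) :
    mul (mul (single α 1) (single β 1)) (single γ 1) =
      mul (single α 1) (mul (single β 1) (single γ 1)) := by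
  by_cases h : Composable₃ S α β γ
  · obtain ⟨x, y, z, w, h1, h2, h3, rfl, rfl, rfl⟩ := h
    rw [hmul.mul_single_mk, hmul.mul_single_mk, hmul.mul_single_mk, hmul.mul_single_mk]
  · rw [hmul.mul_left_assoc_eq_zero hax h, hmul.mul_right_assoc_eq_zero hax h]

end IsIncidenceMul

end IncidenceMul

theorem reduced_incidence_algebra_associative_general
    (P : Type) [PartialOrder P]
    (S : Setoid (IntP P)) (hax2a : Ax2a S)
    (k : Type) [Field k]
    (mul : (Quotient S →₀ k) →ₗ[k] (Quotient S →₀ k) →ₗ[k] (Quotient S →₀ k))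
    (hrule : ∀ α β : Quotient S,
      (∀ (x y w : P) (h1 : x ≤ y) (h2 : y ≤ w),
          α = Quotient.mk S (itv x y h1) → β = Quotient.mk S (itv y w h2) →
          mul (Finsupp.single α 1) (Finsupp.single β 1) =
            Finsupp.single (Quotient.mk S (itv x w (h1.trans h2))) 1) ∧
      ((¬ ∃ (x y w : P) (h1 : x ≤ y) (h2 : y ≤ w),
          α = Quotient.mk S (itv x y h1) ∧ β = Quotient.mk S (itv y w h2)) →
        mul (Finsupp.single α 1) (Finsupp.single β 1) = 0)) :
    ∀ a b c : Quotient S →₀ k, mul (mul a b) c = mul a (mul b c) :=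
  have hmul : IsIncidenceMul S mul := hrule
  Finsupp.assoc_of_assoc_single mul (hmul.assoc_single hax2a)

theorem reduced_incidence_algebra_associative
    (P : Type) [PartialOrder P] (hIcc : ∀ x y : P, (Set.Icc x y).Finite)
    (S : Setoid (IntP P)) (hax1 : Ax1 S) (hax2a : Ax2a S)
    (k : Type) [Field k]
    (mul : (Quotient S →₀ k) →ₗ[k] (Quotient S →₀ k) →ₗ[k] (Quotient S →₀ k))
    (hrule : ∀ α β : Quotient S,
      (∀ (x y w : P) (h1 : x ≤ y) (h2 : y ≤ w),
          α = Quotient.mk S (itv x y h1) → β = Quotient.mk S (itv y w h2) →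
          mul (Finsupp.single α 1) (Finsupp.single β 1) =
            Finsupp.single (Quotient.mk S (itv x w (h1.trans h2))) 1) ∧
      ((¬ ∃ (x y w : P) (h1 : x ≤ y) (h2 : y ≤ w),
          α = Quotient.mk S (itv x y h1) ∧ β = Quotient.mk S (itv y w h2)) →
        mul (Finsupp.single α 1) (Finsupp.single β 1) = 0)) :
    ∀ a b c : Quotient S →₀ k, mul (mul a b) c = mul a (mul b c) :=
  reduced_incidence_algebra_associative_general P S hax2a k mul hrule
end
end

section
/- Let P be a poset in which every closed interval is finite and let ~ be an equivalence relation on Int(P) satisfying Axiom 1 (order-compatibility) and Axiom 2 (invariance, both existence and uniqueness). Then for every closed interval [x,y] of P, the map int_{[x,y]} : [x,y] → (Int(P)/~) × (Int(P)/~) sending z to (class of [x,z], class of [z,y]) is injective. -/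
noncomputable section
/-!
STATEMENT 6: Under Axioms 1 and 2, for every closed interval `[x,y]` of `P` the map
`int_{[x,y]} : [x,y] → (Int(P)/∼)²`, `z ↦ ([x,z]∼, [z,y]∼)`, is injective.
-/
theorem intMap_injective
    (P : Type) [PartialOrder P] (hIcc : ∀ x y : P, (Set.Icc x y).Finite)
    (S : Setoid (IntP P)) (hax1 : Ax1 S) (hax2 : Ax2 S) :
    ∀ (x y : P), x ≤ y → Function.Injective (fun z : Set.Icc x y => intMap S z) := by
  classical
  intro x y hxy z1 z2 h
  simp only at h
  obtain ⟨τ, _, huniq⟩ := hax2 x y x y hxy hxy (S.refl _)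
  have h1 : (fun w : Set.Icc x y => if w = z1 then z2 else w) = id := by
    apply (huniq _ ?_).trans (huniq id (fun z => rfl)).symm
    intro w
    by_cases hw : w = z1 <;> simp [hw, h.symm]
  have := congrFun h1 z1
  simpa using this.symm
end
end

section
/- Let P be a poset in which every closed interval is finite and let ~ be an equivalence relation on Int(P) satisfying Axiom 1 (order-compatibility) and Axiom 2 (invariance). If [x,y]~[x',y'], then the two maps τ : [x,y] → [x',y'] and τ' : [x',y'] → [x,y] provided by Axiom 2 are mutually inverse poset isomorphisms (in particular each is order-preserving and bijective). -/
noncomputable section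
section PosetRel

variable {P : Type} [PartialOrder P]

section AuxTau

variable {P : Type} [PartialOrder P]

theorem tau_unique_aux (S : Setoid (IntP P)) (hax2 : Ax2 S)
    {x y x' y' : P} {h : x ≤ y} {h' : x' ≤ y'}
    (heq : S.r (itv x y h) (itv x' y' h'))
    {σ₁ σ₂ : Set.Icc x y → Set.Icc x' y'}
    (h1 : ∀ z, intMap S (σ₁ z) = intMap S z)
    (h2 : ∀ z, intMap S (σ₂ z) = intMap S z) : σ₁ = σ₂ := by
  obtain ⟨τ₀, _, hu⟩ := hax2 x y x' y' h h' heq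
  rw [hu σ₁ h1, hu σ₂ h2]

theorem tau_mono_aux (S : Setoid (IntP P)) (hax1 : Ax1 S) (hax2 : Ax2 S)
    {x y x' y' : P} {h : x ≤ y} {h' : x' ≤ y'}
    (heq : S.r (itv x y h) (itv x' y' h'))
    {τ : Set.Icc x y → Set.Icc x' y'} (hτ : ∀ z, intMap S (τ z) = intMap S z) :
    Monotone τ := by
  classical
  intro z w hzw
  have hzw' : (z : P) ≤ (w : P) := hzw
  -- relations extracted from `hτ z`
  have r1 : S.r (itv x (z : P) z.2.1) (itv x' ((τ z) : P) (τ z).2.1) :=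
    Quotient.exact (congrArg Prod.fst (hτ z)).symm
  have r2 : S.r (itv (z : P) y z.2.2) (itv ((τ z) : P) y' (τ z).2.2) :=
    Quotient.exact (congrArg Prod.snd (hτ z)).symm
  -- map from `[z, y]` to `[τ z, y']`
  obtain ⟨ρ, hρ, _⟩ := hax2 _ _ _ _ z.2.2 (τ z).2.2 r2
  set wz : Set.Icc (z : P) y := ⟨(w : P), hzw', w.2.2⟩ with hwz
  have hρw := hρ wz
  have r3 : S.r (itv (z : P) (w : P) hzw') (itv ((τ z) : P) ((ρ wz) : P) (ρ wz).2.1) :=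
    Quotient.exact (congrArg Prod.fst hρw).symm
  have r4 : S.r (itv ((ρ wz) : P) y' (ρ wz).2.2) (itv (w : P) y w.2.2) :=
    Quotient.exact (congrArg Prod.snd hρw)
  -- the candidate image of `w`
  have hw1 : x' ≤ ((ρ wz) : P) := (τ z).2.1.trans (ρ wz).2.1
  set w'' : Set.Icc x' y' := ⟨((ρ wz) : P), hw1, (ρ wz).2.2⟩ with hw''
  have r5 : S.r (itv x (w : P) w.2.1) (itv x' ((ρ wz) : P) hw1) :=
    hax1 x (z : P) (w : P) x' ((τ z) : P) ((ρ wz) : P)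
      z.2.1 hzw' (τ z).2.1 (ρ wz).2.1 r1 r3
  have hint : intMap S w'' = intMap S w := by
    apply Prod.ext
    · exact Quotient.sound (S.iseqv.symm r5)
    · exact Quotient.sound r4
  -- modify τ at w
  set σ : Set.Icc x y → Set.Icc x' y' := Function.update τ w w'' with hσdef
  have hσ : ∀ u, intMap S (σ u) = intMap S u := by
    intro u
    by_cases hu : u = w
    · subst hu
      rw [hσdef, Function.update_self]
      exact hint
    · rw [hσdef, Function.update_of_ne hu]
      exact hτ u
  have hστ : τ = σ := tau_unique_aux S hax2 heq hτ hσ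
  have hτw : τ w = w'' := by
    rw [hστ, hσdef, Function.update_self]
  show ((τ z) : P) ≤ ((τ w) : P)
  rw [hτw]
  exact (ρ wz).2.1

end AuxTau
/-!
STATEMENT 7: Under Axioms 1 and 2, if `[x,y] ∼ [x',y']` then the two maps
`τ : [x,y] → [x',y']` and `τ' : [x',y'] → [x,y]` provided by Axiom 2 are mutually
inverse poset isomorphisms; in particular each is order-preserving and bijective.
-/
theorem tau_mutually_inverse_poset_isomorphisms
    (P : Type) [PartialOrder P] (hIcc : ∀ x y : P, (Set.Icc x y).Finite)
    (S : Setoid (IntP P)) (hax1 : Ax1 S) (hax2 : Ax2 S)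
    (x y x' y' : P) (h : x ≤ y) (h' : x' ≤ y')
    (heq : S.r (itv x y h) (itv x' y' h'))
    (τ : Set.Icc x y → Set.Icc x' y') (hτ : ∀ z, intMap S (τ z) = intMap S z)
    (τ' : Set.Icc x' y' → Set.Icc x y) (hτ' : ∀ z, intMap S (τ' z) = intMap S z) :
    (∀ z, τ' (τ z) = z) ∧ (∀ z, τ (τ' z) = z) ∧
      Function.Bijective τ ∧ Function.Bijective τ' ∧
      Monotone τ ∧ Monotone τ' := by
  have hcomp : ∀ z, intMap S (τ' (τ z)) = intMap S z := fun z => (hτ' (τ z)).trans (hτ z)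
  have hcomp' : ∀ z, intMap S (τ (τ' z)) = intMap S z := fun z => (hτ (τ' z)).trans (hτ' z)
  have hid : ∀ z : Set.Icc x y, intMap S (id z) = intMap S z := fun _ => rfl
  have hid' : ∀ z : Set.Icc x' y', intMap S (id z) = intMap S z := fun _ => rfl
  have hli : ∀ z, τ' (τ z) = z := by
    have := tau_unique_aux S hax2 (S.iseqv.refl (itv x y h))
      (σ₁ := fun z => τ' (τ z)) (σ₂ := id) hcomp hid
    exact fun z => congrFun this z
  have hri : ∀ z, τ (τ' z) = z := by
    have := tau_unique_aux S hax2 (S.iseqv.refl (itv x' y' h'))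
      (σ₁ := fun z => τ (τ' z)) (σ₂ := id) hcomp' hid'
    exact fun z => congrFun this z
  refine ⟨hli, hri, ⟨Function.LeftInverse.injective hli,
    Function.RightInverse.surjective hri⟩,
    ⟨Function.LeftInverse.injective hri, Function.RightInverse.surjective hli⟩,
    tau_mono_aux S hax1 hax2 heq hτ, tau_mono_aux S hax1 hax2 (S.iseqv.symm heq) hτ'⟩
end PosetRel
end
end

section
/- Let P be a poset in which every closed interval is finite and let ~ be an equivalence relation on Int(P) satisfying Axiom 1 (order-compatibility) and Axiom 2 (invariance). Whenever [x,z]~[x',z'] with τ : [x,z] → [x',z'] the unique map of Axiom 2, then for any y in [x,z] the unique maps τ_{[x,y]} : [x,y] → [x',τ(y)] and τ_{[y,z]} : [y,z] → [τ(y),z'] of Axiom 2 (applied to the equivalences [x,y]~[x',τ(y)] and [y,z]~[τ(y),z']) coincide with the restrictions of τ to the domains [x,y] and [y,z], respectively. -/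
noncomputable section
/-- Pointwise determination: any point with the same interval data as `τ p` equals `τ p`. -/
lemma tau_pointwise {P : Type} [PartialOrder P]
    (S : Setoid (IntP P)) (hax2 : Ax2 S)
    (x z x' z' : P) (hxz : x ≤ z) (hxz' : x' ≤ z')
    (heq : S.r (itv x z hxz) (itv x' z' hxz'))
    (τ : Set.Icc x z → Set.Icc x' z') (hτ : ∀ w, intMap S (τ w) = intMap S w)
    (p : Set.Icc x z) (p' : Set.Icc x' z') (h : intMap S p' = intMap S p) :
    τ p = p' := by
  classical
  obtain ⟨τ0, h0, huniq⟩ := hax2 x z x' z' hxz hxz' heq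
  set σ : Set.Icc x z → Set.Icc x' z' := fun v => if v = p then p' else τ v with hσdef
  have hσ : ∀ v, intMap S (σ v) = intMap S v := by
    intro v
    by_cases hv : v = p
    · subst hv; simpa [hσdef] using h
    · simp [hσdef, hv, hτ v]
  have hστ : σ = τ := (huniq σ hσ).trans (huniq τ hτ).symm
  have := congrFun hστ p
  simpa [hσdef] using this.symm

/-!
STATEMENT 8: Under Axioms 1 and 2, if `[x,z] ∼ [x',z']` with `τ : [x,z] → [x',z']` the
unique map of Axiom 2, then for any `y ∈ [x,z]` the unique maps
`τ_{[x,y]} : [x,y] → [x',τ(y)]` and `τ_{[y,z]} : [y,z] → [τ(y),z']` of Axiom 2 coincide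
with the restrictions of `τ` to `[x,y]` and `[y,z]`, respectively.
-/
theorem tau_restriction_coherence
    (P : Type) [PartialOrder P] (hIcc : ∀ x y : P, (Set.Icc x y).Finite)
    (S : Setoid (IntP P)) (hax1 : Ax1 S) (hax2 : Ax2 S)
    (x z x' z' : P) (hxz : x ≤ z) (hxz' : x' ≤ z')
    (heq : S.r (itv x z hxz) (itv x' z' hxz'))
    (τ : Set.Icc x z → Set.Icc x' z') (hτ : ∀ w, intMap S (τ w) = intMap S w)
    (y : Set.Icc x z)
    (τ1 : Set.Icc x (y : P) → Set.Icc x' ((τ y : Set.Icc x' z') : P))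
    (hτ1 : ∀ w, intMap S (τ1 w) = intMap S w)
    (τ2 : Set.Icc (y : P) z → Set.Icc ((τ y : Set.Icc x' z') : P) z')
    (hτ2 : ∀ w, intMap S (τ2 w) = intMap S w) :
    (∀ w : Set.Icc x (y : P),
      ((τ1 w : Set.Icc x' ((τ y : Set.Icc x' z') : P)) : P) =
        ((τ ⟨(w : P), ⟨w.2.1, le_trans w.2.2 y.2.2⟩⟩ : Set.Icc x' z') : P)) ∧
    (∀ w : Set.Icc (y : P) z,
      ((τ2 w : Set.Icc ((τ y : Set.Icc x' z') : P) z') : P) =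
        ((τ ⟨(w : P), ⟨le_trans y.2.1 w.2.1, w.2.2⟩⟩ : Set.Icc x' z') : P)) := by
  have hy := hτ y
  have hy1 : Quotient.mk S (itv x' ((τ y : Set.Icc x' z') : P) (τ y).2.1)
      = Quotient.mk S (itv x (y : P) y.2.1) := congrArg Prod.fst hy
  have hy2 : Quotient.mk S (itv ((τ y : Set.Icc x' z') : P) z' (τ y).2.2)
      = Quotient.mk S (itv (y : P) z y.2.2) := congrArg Prod.snd hy
  constructor
  · intro w
    set wz : Set.Icc x z := ⟨(w : P), ⟨w.2.1, le_trans w.2.2 y.2.2⟩⟩ with hwz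
    set u := τ1 w with hu
    set u' : Set.Icc x' z' := ⟨(u : P), ⟨u.2.1, le_trans u.2.2 (τ y).2.2⟩⟩ with hu'
    have hA : Quotient.mk S (itv x' (u : P) u.2.1)
        = Quotient.mk S (itv x (w : P) w.2.1) := congrArg Prod.fst (hτ1 w)
    have hB : Quotient.mk S (itv (u : P) ((τ y : Set.Icc x' z') : P) u.2.2)
        = Quotient.mk S (itv (w : P) (y : P) w.2.2) := congrArg Prod.snd (hτ1 w)
    have hC : S.r (itv (w : P) z (le_trans w.2.2 y.2.2))
        (itv (u : P) z' (le_trans u.2.2 (τ y).2.2)) :=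
      hax1 (w : P) (y : P) z (u : P) ((τ y : Set.Icc x' z') : P) z'
        w.2.2 y.2.2 u.2.2 (τ y).2.2 (Quotient.exact hB.symm) (Quotient.exact hy2.symm)
    have hmap : intMap S u' = intMap S wz := by
      refine Prod.ext ?_ ?_
      · exact hA
      · exact (Quotient.sound hC).symm
    have := tau_pointwise S hax2 x z x' z' hxz hxz' heq τ hτ wz u' hmap
    exact (congrArg Subtype.val this).symm
  · intro w
    set wz : Set.Icc x z := ⟨(w : P), ⟨le_trans y.2.1 w.2.1, w.2.2⟩⟩ with hwz
    set u := τ2 w with hu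
    set u' : Set.Icc x' z' := ⟨(u : P), ⟨le_trans (τ y).2.1 u.2.1, u.2.2⟩⟩ with hu'
    have hA : Quotient.mk S (itv ((τ y : Set.Icc x' z') : P) (u : P) u.2.1)
        = Quotient.mk S (itv (y : P) (w : P) w.2.1) := congrArg Prod.fst (hτ2 w)
    have hB : Quotient.mk S (itv (u : P) z' u.2.2)
        = Quotient.mk S (itv (w : P) z w.2.2) := congrArg Prod.snd (hτ2 w)
    have hC : S.r (itv x (w : P) (le_trans y.2.1 w.2.1))
        (itv x' (u : P) (le_trans (τ y).2.1 u.2.1)) :=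
      hax1 x (y : P) (w : P) x' ((τ y : Set.Icc x' z') : P) (u : P)
        y.2.1 w.2.1 (τ y).2.1 u.2.1 (Quotient.exact hy1.symm) (Quotient.exact hA.symm)
    have hmap : intMap S u' = intMap S wz := by
      refine Prod.ext ?_ ?_
      · exact (Quotient.sound hC).symm
      · exact hB
    have := tau_pointwise S hax2 x z x' z' hxz hxz' heq τ hτ wz u' hmap
    exact (congrArg Subtype.val this).symm
end
end

section
/- Let P be a poset in which every closed interval is finite and let ~ be an equivalence relation on Int(P) satisfying Axioms 1-4 (order-compatibility, invariance, finiteness, concatenation). Fix a class α in Int(P)/~ with representative interval [x(α),y(α)], and fix i ≥ 1. Then the map φ_α sending a length-i multichain x(α) = x_0 ≤ x_1 ≤ ⋯ ≤ x_i = y(α) to the i-tuple of classes ([x_0,x_1]~, [x_1,x_2]~, …, [x_{i-1},x_i]~) is a bijection from the set of all length-i multichains in [x(α),y(α)] from x(α) to y(α) onto the set of all i-tuples (α_1,…,α_i) of classes satisfying t(α_{j-1}) = s(α_j) for 1 ≤ j ≤ i+1 (with the conventions α_0 := s(α), α_{i+1} := t(α)) and ξ_{α_1}⋯ξ_{α_i}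 = ξ_α in k[P]_red. -/
noncomputable section
/-! Record a multichain by the list of classes of its steps. Axiom 2 makes `int_{[x,y]}`
injective and lets such a list be transported along `∼`; Axiom 1 determines the classes of
`[x₀, x_j]` and `[x_j, xᵢ]` from the steps, so a multichain with given endpoints is determined
by its step classes. Conversely, the multiplication rule shows inductively that
`ξ_{α₁} ⋯ ξ_{αᵢ}` is either `0` or `ξ_{[a,b]∼}` for a multichain from `a` to `b` with step
classes `α₁, …, αᵢ`; if the product is the basis vector `ξ_α`, then `[a,b] ∼ [x(α), y(α)]`
and transporting the multichain gives a preimage under `φ_α`. -/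

section Multichains

variable {P : Type} [PartialOrder P] {S : Setoid (IntP P)}

theorem mk_itv_congr {a b a' b' : P} (ha : a = a') (hb : b = b') (h : a ≤ b) (h' : a' ≤ b') :
    Quotient.mk S (itv a b h) = Quotient.mk S (itv a' b' h') := by
  subst ha hb
  rfl

/-- By the uniqueness in Axiom 2, the transposition of two points with the same image under
`int` is the identity. -/
theorem intMap_injective_s10 (hax2 : Ax2 S) {x y : P} (h : x ≤ y) :
    Function.Injective (intMap S (x := x) (y := y)) := by
  classical
  intro z z' hzz
  obtain ⟨τ, -, huniq⟩ := hax2 x y x y h h (S.iseqv.refl _)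
  have hswap : ∀ w, intMap S (Equiv.swap z z' w) = intMap S w := by
    intro w
    rcases eq_or_ne w z with rfl | hz
    · rw [Equiv.swap_apply_left, hzz]
    rcases eq_or_ne w z' with rfl | hz'
    · rw [Equiv.swap_apply_right, hzz]
    rw [Equiv.swap_apply_of_ne_of_ne hz hz']
  have hid : ⇑(Equiv.swap z z') = id := (huniq _ hswap).trans (huniq id fun _ => rfl).symm
  simpa using (congrFun hid z).symm

theorem eq_of_rel_itv_self (hax2 : Ax2 S) {a b x : P} (hab : a ≤ b)
    (hr : S.r (itv a b hab) (itv x x le_rfl)) : a = b := by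
  obtain ⟨τ, hτ, -⟩ := hax2 a b x x hab le_rfl hr
  have hpt : ∀ u : Set.Icc x x, (u : P) = x := fun u => le_antisymm u.2.2 u.2.1
  have hτab : τ ⟨a, le_rfl, hab⟩ = τ ⟨b, hab, le_rfl⟩ := Subtype.ext ((hpt _).trans (hpt _).symm)
  have := intMap_injective_s10 hax2 hab ((hτ _).symm.trans ((congrArg (intMap S) hτab).trans (hτ _)))
  exact congrArg Subtype.val this

theorem diagCl_eq_of_rel (hax2 : Ax2 S) {x y x' y' : P} (h : x ≤ y) (h' : x' ≤ y')
    (hr : S.r (itv x y h) (itv x' y' h')) :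
    diagCl S x = diagCl S x' ∧ diagCl S y = diagCl S y' := by
  obtain ⟨τ, hτ, -⟩ := hax2 x y x' y' h h' hr
  obtain ⟨hx, -⟩ := Prod.ext_iff.mp (hτ ⟨x, le_rfl, h⟩)
  obtain ⟨-, hy⟩ := Prod.ext_iff.mp (hτ ⟨y, h, le_rfl⟩)
  have ex := eq_of_rel_itv_self hax2 _ (Quotient.exact hx)
  have ey := eq_of_rel_itv_self hax2 _ (Quotient.exact hy)
  exact ⟨hx.symm.trans (mk_itv_congr rfl ex.symm _ _), hy.symm.trans (mk_itv_congr ey rfl _ _)⟩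

theorem sclP_mk (hax2 : Ax2 S) {x y : P} (h : x ≤ y) :
    sclP S (Quotient.mk S (itv x y h)) = diagCl S x :=
  (diagCl_eq_of_rel hax2 _ h (Quotient.exact (Quotient.out_eq _))).1

theorem tclP_mk (hax2 : Ax2 S) {x y : P} (h : x ≤ y) :
    tclP S (Quotient.mk S (itv x y h)) = diagCl S y :=
  (diagCl_eq_of_rel hax2 _ h (Quotient.exact (Quotient.out_eq _))).2

variable (S) in
/-- `Realizes S l a b`: `l` is the list of classes of the steps of a multichain from `a` to `b`. -/
inductive Realizes : List (Quotient S) → P → P → Prop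
  | nil (a : P) : Realizes [] a a
  | cons {a c b : P} {β : Quotient S} {l : List (Quotient S)} (hac : a ≤ c)
      (hβ : Quotient.mk S (itv a c hac) = β) : Realizes l c b → Realizes (β :: l) a b

namespace Realizes

variable {l : List (Quotient S)} {a b : P}

theorem le (h : Realizes S l a b) : a ≤ b := by
  induction h with
  | nil => exact le_rfl
  | cons hac _ _ ih => exact hac.trans ih

theorem transport (hax2 : Ax2 S) (h : Realizes S l a b) {a' b' : P} (hab : a ≤ b)
    (hab' : a' ≤ b') (hr : S.r (itv a b hab) (itv a' b' hab')) : Realizes S l a' b' := by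
  induction h generalizing a' b' with
  | nil a =>
    obtain rfl := eq_of_rel_itv_self hax2 hab' (S.iseqv.symm hr)
    exact nil a'
  | cons hac hβ hl ih =>
    obtain ⟨τ, hτ, -⟩ := hax2 _ _ a' b' hab hab' hr
    obtain ⟨hfst, hsnd⟩ := Prod.ext_iff.mp (hτ ⟨_, hac, hl.le⟩)
    exact cons (τ _).2.1 (hfst.trans hβ) (ih hl.le (τ _).2.2 (Quotient.exact hsnd.symm))

theorem mk_eq (hax1 : Ax1 S) (h : Realizes S l a b) {a' b' : P} (h' : Realizes S l a' b')
    (hb : diagCl S b = diagCl S b') (hab : a ≤ b) (hab' : a' ≤ b') :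
    Quotient.mk S (itv a b hab) = Quotient.mk S (itv a' b' hab') := by
  induction h generalizing a' with
  | nil => cases h'; exact hb
  | cons hac hβ hl ih =>
    cases h' with
    | cons hac' hβ' hl' =>
      exact Quotient.sound (hax1 _ _ _ _ _ _ hac hl.le hac' hl'.le
        (Quotient.exact (hβ.trans hβ'.symm)) (Quotient.exact (ih hl' hb hl.le hl'.le)))

variable {A : Type} [Ring A] {ξ : Quotient S → A}

theorem prod_map_eq (hrule : MulRuleA S ξ) (h : Realizes S l a b) (hl : l ≠ []) (hab : a ≤ b) :
    (l.map ξ).prod = ξ (Quotient.mk S (itv a b hab)) := by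
  induction h with
  | nil => exact absurd rfl hl
  | @cons a c b β l hac hβ htail ih =>
    rw [List.map_cons, List.prod_cons]
    rcases eq_or_ne l [] with rfl | hne
    · cases htail
      rw [List.map_nil, List.prod_nil, mul_one, ← hβ]
    · rw [ih hne htail.le]
      exact (hrule _ _).1 a c b hac htail.le hβ.symm rfl

theorem exists_of_prod_map (hax2 : Ax2 S) (hrule : MulRuleA S ξ) (hl : l ≠ []) :
    (l.map ξ).prod = 0 ∨ ∃ (a b : P) (hab : a ≤ b),
      Realizes S l a b ∧ (l.map ξ).prod = ξ (Quotient.mk S (itv a b hab)) := by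
  induction l with
  | nil => exact absurd rfl hl
  | cons β l ih =>
    rw [List.map_cons, List.prod_cons]
    rcases eq_or_ne l [] with rfl | hne
    · obtain ⟨⟨⟨a, b⟩, hab⟩, rfl⟩ := Quotient.exists_rep β
      refine .inr ⟨a, b, hab, cons hab rfl (nil b), ?_⟩
      rw [List.map_nil, List.prod_nil, mul_one]
      rfl
    rcases ih hne with h0 | ⟨c, d, hcd, htail, hprod⟩
    · exact .inl (by rw [h0, mul_zero])
    rw [hprod]
    by_cases hex : ∃ (x y w : P) (h1 : x ≤ y) (h2 : y ≤ w),
        β = Quotient.mk S (itv x y h1) ∧ Quotient.mk S (itv c d hcd) = Quotient.mk S (itv y w h2)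
    · obtain ⟨x, y, w, h1, h2, hβ, hcd'⟩ := hex
      exact .inr ⟨x, w, h1.trans h2,
        cons h1 hβ.symm (htail.transport hax2 hcd h2 (Quotient.exact hcd')),
        (hrule _ _).1 x y w h1 h2 hβ hcd'⟩
    · exact .inl ((hrule _ _).2 hex)

theorem iff_prod_map_eq (hax2 : Ax2 S) (hrule : MulRuleA S ξ) (hinj : Function.Injective ξ)
    (hne : ∀ α, ξ α ≠ 0) (hl : l ≠ []) (hab : a ≤ b) :
    Realizes S l a b ↔ (l.map ξ).prod = ξ (Quotient.mk S (itv a b hab)) := by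
  refine ⟨fun h => h.prod_map_eq hrule hl hab, fun hprod => ?_⟩
  rcases exists_of_prod_map hax2 hrule hl with h0 | ⟨c, d, hcd, h, hcd'⟩
  · exact absurd (hprod.symm.trans h0) (hne _)
  · exact h.transport hax2 hcd hab (Quotient.exact (hinj (hcd'.symm.trans hprod)))

end Realizes

variable (S) in
def stepClasses {n : ℕ} (m : Fin (n + 1) → P) (hm : Monotone m) : Fin n → Quotient S :=
  fun j => Quotient.mk S (itv (m j.castSucc) (m j.succ) (hm j.castSucc_le_succ))

theorem realizes_ofFn_stepClasses {n : ℕ} (m : Fin (n + 1) → P) (hm : Monotone m) :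
    Realizes S (List.ofFn (stepClasses S m hm)) (m 0) (m (Fin.last n)) := by
  induction n with
  | zero => exact Realizes.nil _
  | succ n ih =>
    rw [List.ofFn_succ]
    exact .cons (hm (Fin.zero_le _)) rfl
      (ih (Fin.tail m) (hm.comp Fin.strictMono_succ.monotone))

theorem exists_stepClasses_eq_of_realizes {n : ℕ} {t : Fin n → Quotient S} {a b : P}
    (h : Realizes S (List.ofFn t) a b) :
    ∃ (m : Fin (n + 1) → P) (hm : Monotone m), m 0 = a ∧ m (Fin.last n) = b ∧
      stepClasses S m hm = t := by
  induction n generalizing a with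
  | zero =>
    cases h
    exact ⟨fun _ => _, monotone_const, rfl, rfl, funext fun j => j.elim0⟩
  | succ n ih =>
    rw [List.ofFn_succ] at h
    cases h with
    | cons hac hβ htail =>
      obtain ⟨m, hm, hm0, hlast, hst⟩ := ih htail
      have hcons : Monotone (Fin.cons a m : Fin (n + 2) → P) := by
        refine Fin.monotone_iff_le_succ.mpr fun j => Fin.cases ?_ (fun k => ?_) j
        · simpa [hm0] using hac
        · simpa using hm k.castSucc_le_succ
      refine ⟨Fin.cons a m, hcons, rfl, hlast, funext fun j => Fin.cases ?_ (fun k => ?_) j⟩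
      · exact (mk_itv_congr rfl hm0 _ hac).trans hβ
      · exact congrFun hst k

theorem eq_of_stepClasses_eq (hax1 : Ax1 S) (hax2 : Ax2 S) {n : ℕ} {m m' : Fin (n + 1) → P}
    {a b : P} (hm : Monotone m) (hm' : Monotone m') (h0 : m 0 = a) (h0' : m' 0 = a)
    (hlast : m (Fin.last n) = b) (hlast' : m' (Fin.last n) = b)
    (h : stepClasses S m hm = stepClasses S m' hm') : m = m' := by
  induction n generalizing a with
  | zero => exact funext fun j => by rw [Fin.fin_one_eq_zero j, h0, h0']
  | succ n ih =>
    have htm : Monotone (Fin.tail m) := hm.comp Fin.strictMono_succ.monotone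
    have htm' : Monotone (Fin.tail m') := hm'.comp Fin.strictMono_succ.monotone
    have htail : stepClasses S (Fin.tail m) htm = stepClasses S (Fin.tail m') htm' :=
      funext fun j => congrFun h j.succ
    have hreal := realizes_ofFn_stepClasses (S := S) (Fin.tail m) htm
    have hreal' := realizes_ofFn_stepClasses (S := S) (Fin.tail m') htm'
    rw [htail] at hreal
    have hstart : a ≤ m (Fin.succ 0) := h0 ▸ hm (Fin.zero_le _)
    have hstart' : a ≤ m' (Fin.succ 0) := h0' ▸ hm' (Fin.zero_le _)
    have hend : m (Fin.succ 0) ≤ b := hlast ▸ hm (Fin.le_last _)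
    have hend' : m' (Fin.succ 0) ≤ b := hlast' ▸ hm' (Fin.le_last _)
    have hmid : m (Fin.succ 0) = m' (Fin.succ 0) := by
      refine congrArg Subtype.val (intMap_injective_s10 hax2 (hstart.trans hend)
        (a₁ := ⟨_, hstart, hend⟩) (a₂ := ⟨_, hstart', hend'⟩) (Prod.ext ?_ ?_))
      · exact (mk_itv_congr h0.symm rfl _ _).trans
          ((congrFun h 0).trans (mk_itv_congr h0' rfl _ _))
      · have hsuffix := hreal.mk_eq hax1 hreal'
          (congrArg (diagCl S) (hlast.trans hlast'.symm)) hreal.le hreal'.le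
        exact (mk_itv_congr rfl hlast.symm _ _).trans
          (hsuffix.trans (mk_itv_congr rfl hlast' _ _))
    have htails : Fin.tail m = Fin.tail m' := ih htm htm' rfl hmid.symm hlast hlast' htail
    rw [← Fin.cons_self_tail m, ← Fin.cons_self_tail m', h0, h0', htails]

end Multichains

theorem multichains_biject_with_composable_tuples_general
    (P : Type) [PartialOrder P]
    (S : Setoid (IntP P)) (hax1 : Ax1 S) (hax2 : Ax2 S)
    (k : Type) [Field k] (A : Type) [Ring A] [Algebra k A]
    (ξ : Module.Basis (Quotient S) k A) (hrule : MulRuleA S ⇑ξ)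
    (xa ya : P) (hxy : xa ≤ ya) (i : ℕ) (hi : 1 ≤ i) :
    ∃ e : {m : Fin (i + 1) → P // Monotone m ∧ m 0 = xa ∧ m (Fin.last i) = ya} ≃
        {t : Fin i → Quotient S //
          (∀ j₁ j₂ : Fin i, (j₁ : ℕ) + 1 = (j₂ : ℕ) → tclP S (t j₁) = sclP S (t j₂)) ∧
          (∀ h0 : 0 < i,
            sclP S (t ⟨0, h0⟩) = sclP S (Quotient.mk S (itv xa ya hxy))) ∧
          (∀ hl : i - 1 < i,
            tclP S (t ⟨i - 1, hl⟩) = tclP S (Quotient.mk S (itv xa ya hxy))) ∧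
          (List.ofFn fun j : Fin i => ξ (t j)).prod = ξ (Quotient.mk S (itv xa ya hxy))},
      ∀ (m : {m : Fin (i + 1) → P // Monotone m ∧ m 0 = xa ∧ m (Fin.last i) = ya})
        (j : Fin i),
        ((e m) : Fin i → Quotient S) j =
          Quotient.mk S (itv (m.val j.castSucc) (m.val j.succ)
            (m.2.1 (Fin.castSucc_lt_succ (i := j)).le)) := by
  have hne : ∀ t : Fin i → Quotient S, List.ofFn t ≠ [] := fun t => by
    rw [Ne, List.ofFn_eq_nil_iff]; omega
  have hprod : ∀ t : Fin i → Quotient S,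
      (List.ofFn fun j => ξ (t j)).prod = ((List.ofFn t).map ξ).prod := fun t => by
    rw [List.map_ofFn]; rfl
  refine ⟨Equiv.ofBijective (fun m => ⟨stepClasses S m.1 m.2.1, ?_, ?_, ?_, ?_⟩) ⟨?_, ?_⟩,
    fun m j => rfl⟩
  · intro j₁ j₂ hj
    simp only [stepClasses, tclP_mk hax2, sclP_mk hax2]
    exact congrArg (diagCl S ∘ m.1) (Fin.ext (by simp [← hj]))
  · intro h0
    simp only [stepClasses, sclP_mk hax2]
    exact congrArg (diagCl S) m.2.2.1
  · intro hl
    simp only [stepClasses, tclP_mk hax2]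
    exact congrArg (diagCl S) ((congrArg m.1 (Fin.ext (by simp; omega))).trans m.2.2.2)
  · rw [hprod, (realizes_ofFn_stepClasses m.1 m.2.1).prod_map_eq hrule (hne _)
      (m.2.1 (Fin.zero_le _))]
    exact congrArg ξ (mk_itv_congr m.2.2.1 m.2.2.2 _ _)
  · intro m m' hmm
    exact Subtype.ext (eq_of_stepClasses_eq hax1 hax2 m.2.1 m'.2.1 m.2.2.1 m'.2.2.1 m.2.2.2
      m'.2.2.2 (congrArg Subtype.val hmm))
  · rintro ⟨t, -, -, -, ht⟩
    rw [hprod, ← Realizes.iff_prod_map_eq hax2 hrule ξ.injective ξ.ne_zero (hne t)] at ht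
    obtain ⟨m, hm, hm0, hlast, hst⟩ := exists_stepClasses_eq_of_realizes ht
    exact ⟨⟨m, hm, hm0, hlast⟩, Subtype.ext hst⟩

theorem multichains_biject_with_composable_tuples
    (P : Type) [PartialOrder P] (hIcc : ∀ x y : P, (Set.Icc x y).Finite)
    (S : Setoid (IntP P)) (hax1 : Ax1 S) (hax2 : Ax2 S) (hax3 : Ax3 S) (hax4 : Ax4 S)
    (k : Type) [Field k] (A : Type) [Ring A] [Algebra k A]
    (ξ : Module.Basis (Quotient S) k A) (hrule : MulRuleA S ⇑ξ)
    (xa ya : P) (hxy : xa ≤ ya) (i : ℕ) (hi : 1 ≤ i) :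
    ∃ e : {m : Fin (i + 1) → P // Monotone m ∧ m 0 = xa ∧ m (Fin.last i) = ya} ≃
        {t : Fin i → Quotient S //
          (∀ j₁ j₂ : Fin i, (j₁ : ℕ) + 1 = (j₂ : ℕ) → tclP S (t j₁) = sclP S (t j₂)) ∧
          (∀ h0 : 0 < i,
            sclP S (t ⟨0, h0⟩) = sclP S (Quotient.mk S (itv xa ya hxy))) ∧
          (∀ hl : i - 1 < i,
            tclP S (t ⟨i - 1, hl⟩) = tclP S (Quotient.mk S (itv xa ya hxy))) ∧
          (List.ofFn fun j : Fin i => ξ (t j)).prod = ξ (Quotient.mk S (itv xa ya hxy))},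
      ∀ (m : {m : Fin (i + 1) → P // Monotone m ∧ m 0 = xa ∧ m (Fin.last i) = ya})
        (j : Fin i),
        ((e m) : Fin i → Quotient S) j =
          Quotient.mk S (itv (m.val j.castSucc) (m.val j.succ)
            (m.2.1 (Fin.castSucc_lt_succ (i := j)).le)) :=
  multichains_biject_with_composable_tuples_general P S hax1 hax2 k A ξ hrule xa ya hxy i hi
end
end
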